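/- arXiv:2509.07000 — 2 statements merged into one kernel-verified Lean document; each statement's English description precedes it below -/
import Mathlib

section
/- Odd-cycle margin rule: let k ≥ 1, n = 2k+1, and ε, τ > 0 with ε < τ/(4k+2). Suppose μ is a probability mass function on assignments x : ZMod n → Bool, and for each i ∈ ZMod n the observed context marginal q_i : Bool × Bool → ℝ satisfies the L1 bound ∑_{(s,t)} |q_i(s,t) − p_i(s,t)| ≤ 2ε, where p_i(s,t) is the μ-probability of {x | x(i) = s ∧ x(i+1) = t}. Then the observed total disagreement mass ∑_i (q_i(false,true) + q_i(true,false)) is strictly less than 2k + τ; equivalently, an observed violation with margin τ (total disagreement mass ≥ 2k + τ) cannot be explained by any such μ, so it is genuine. -/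
lemma exists_agree (k : ℕ) (x : ZMod (2 * k + 1) → Bool) : ∃ i, x i = x (i + 1) := by
  by_contra h
  push_neg at h
  have key : ∀ m : ℕ, x (m : ZMod (2 * k + 1)) = (if m % 2 = 0 then x 0 else !(x 0)) := by
    intro m
    induction m with
    | zero => simp
    | succ m ih =>
      have h1 : x ((m : ZMod (2 * k + 1)) + 1) = !(x (m : ZMod (2 * k + 1))) := by
        have h2 := h (m : ZMod (2 * k + 1))
        cases hb : x ((m : ZMod (2 * k + 1)) + 1) <;>
          cases hb' : x (m : ZMod (2 * k + 1)) <;> simp_all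
      have hc : ((m + 1 : ℕ) : ZMod (2 * k + 1)) = (m : ZMod (2 * k + 1)) + 1 := by
        push_cast; ring
      rw [hc, h1, ih]
      rcases Nat.mod_two_eq_zero_or_one m with h2 | h2 <;> simp [Nat.add_mod, h2]
  have h0 := key (2 * k + 1)
  rw [ZMod.natCast_self] at h0
  have h1 : (2 * k + 1) % 2 = 1 := by omega
  rw [h1] at h0
  simp at h0

lemma card_disagree_le (k : ℕ) (x : ZMod (2 * k + 1) → Bool) :
    (Finset.univ.filter (fun i => x i ≠ x (i + 1))).card ≤ 2 * k := by
  obtain ⟨i, hi⟩ := exists_agree k x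
  have hlt : (Finset.univ.filter (fun i => x i ≠ x (i + 1))).card
      < Fintype.card (ZMod (2 * k + 1)) := by
    rw [Finset.card_lt_iff_ne_univ]
    intro hcon
    have := Finset.mem_filter.mp (hcon ▸ Finset.mem_univ i)
    exact this.2 hi
  rw [ZMod.card] at hlt
  omega

/-- Odd-cycle margin rule: if `ε < τ/(4k+2)` and each observed context marginal
`q i` is within L1-distance `2ε` of the true marginal of `μ`, then the observed
total disagreement mass is strictly below `2k + τ`; i.e. an observed violation
with margin `τ` is genuine. -/
theorem stmt5 (k : ℕ) (hk : 1 ≤ k) (ε τ : ℝ) (hε : 0 < ε) (hτ : 0 < τ)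
    (hmargin : ε < τ / (4 * (k : ℝ) + 2))
    (μ : (ZMod (2 * k + 1) → Bool) → ℝ)
    (hnn : ∀ x, 0 ≤ μ x) (hsum : ∑ x, μ x = 1)
    (q : ZMod (2 * k + 1) → Bool × Bool → ℝ)
    (hq : ∀ i : ZMod (2 * k + 1),
      ∑ st : Bool × Bool,
        |q i st -
          ∑ x ∈ Finset.univ.filter
            (fun x : ZMod (2 * k + 1) → Bool => x i = st.1 ∧ x (i + 1) = st.2),
            μ x| ≤ 2 * ε) :
    ∑ i : ZMod (2 * k + 1), (q i (false, true) + q i (true, false))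
      < 2 * (k : ℝ) + τ := by
  have step1 : ∀ i : ZMod (2 * k + 1), q i (false, true) + q i (true, false)
      ≤ (∑ x ∈ Finset.univ.filter
          (fun x : ZMod (2 * k + 1) → Bool => x i ≠ x (i + 1)), μ x) + 2 * ε := by
    intro i
    have hD : (∑ x ∈ Finset.univ.filter
          (fun x : ZMod (2 * k + 1) → Bool => x i = false ∧ x (i + 1) = true), μ x)
        + (∑ x ∈ Finset.univ.filter
          (fun x : ZMod (2 * k + 1) → Bool => x i = true ∧ x (i + 1) = false), μ x)
        = ∑ x ∈ Finset.univ.filter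
          (fun x : ZMod (2 * k + 1) → Bool => x i ≠ x (i + 1)), μ x := by
      simp only [Finset.sum_filter, ← Finset.sum_add_distrib]
      apply Finset.sum_congr rfl
      intro x _
      cases hb : x i <;> cases hb' : x (i + 1) <;> simp [hb, hb']
    have h4 := hq i
    rw [Fintype.sum_prod_type, Fintype.sum_bool, Fintype.sum_bool, Fintype.sum_bool] at h4
    have a1 : (0:ℝ) ≤ |q i (true, true) - ∑ x ∈ Finset.univ.filter
        (fun x : ZMod (2 * k + 1) → Bool => x i = true ∧ x (i + 1) = true), μ x| :=
      abs_nonneg _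
    have a2 : (0:ℝ) ≤ |q i (false, false) - ∑ x ∈ Finset.univ.filter
        (fun x : ZMod (2 * k + 1) → Bool => x i = false ∧ x (i + 1) = false), μ x| :=
      abs_nonneg _
    have c1 := le_abs_self (q i (false, true) - ∑ x ∈ Finset.univ.filter
        (fun x : ZMod (2 * k + 1) → Bool => x i = false ∧ x (i + 1) = true), μ x)
    have c2 := le_abs_self (q i (true, false) - ∑ x ∈ Finset.univ.filter
        (fun x : ZMod (2 * k + 1) → Bool => x i = true ∧ x (i + 1) = false), μ x)
    simp only at h4 c1 c2
    linarith
  have step2 : ∑ i : ZMod (2 * k + 1),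
      (∑ x ∈ Finset.univ.filter
        (fun x : ZMod (2 * k + 1) → Bool => x i ≠ x (i + 1)), μ x)
      ≤ 2 * (k : ℝ) := by
    have swap : ∑ i : ZMod (2 * k + 1),
        (∑ x ∈ Finset.univ.filter
          (fun x : ZMod (2 * k + 1) → Bool => x i ≠ x (i + 1)), μ x)
        = ∑ x : ZMod (2 * k + 1) → Bool,
          ((Finset.univ.filter (fun i : ZMod (2 * k + 1) => x i ≠ x (i + 1))).card : ℝ)
            * μ x := by
      simp_rw [Finset.sum_filter]
      rw [Finset.sum_comm]
      apply Finset.sum_congr rfl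
      intro x _
      rw [← Finset.sum_filter, Finset.sum_const, nsmul_eq_mul]
    rw [swap]
    calc ∑ x : ZMod (2 * k + 1) → Bool,
          ((Finset.univ.filter (fun i : ZMod (2 * k + 1) => x i ≠ x (i + 1))).card : ℝ)
            * μ x
        ≤ ∑ x : ZMod (2 * k + 1) → Bool, (2 * (k : ℝ)) * μ x := by
          apply Finset.sum_le_sum
          intro x _
          apply mul_le_mul_of_nonneg_right _ (hnn x)
          exact_mod_cast card_disagree_le k x
      _ = 2 * (k : ℝ) := by rw [← Finset.mul_sum, hsum, mul_one]
  have total : ∑ i : ZMod (2 * k + 1), (q i (false, true) + q i (true, false))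
      ≤ 2 * (k : ℝ) + ((2 * k + 1 : ℕ) : ℝ) * (2 * ε) := by
    calc ∑ i : ZMod (2 * k + 1), (q i (false, true) + q i (true, false))
        ≤ ∑ i : ZMod (2 * k + 1),
          ((∑ x ∈ Finset.univ.filter
            (fun x : ZMod (2 * k + 1) → Bool => x i ≠ x (i + 1)), μ x)
            + 2 * ε) := Finset.sum_le_sum (fun i _ => step1 i)
      _ = (∑ i : ZMod (2 * k + 1),
            (∑ x ∈ Finset.univ.filter
              (fun x : ZMod (2 * k + 1) → Bool => x i ≠ x (i + 1)), μ x))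
            + (Fintype.card (ZMod (2 * k + 1)) : ℝ) * (2 * ε) := by
          rw [Finset.sum_add_distrib, Finset.sum_const, nsmul_eq_mul, Finset.card_univ]
      _ ≤ 2 * (k : ℝ) + ((2 * k + 1 : ℕ) : ℝ) * (2 * ε) := by
          rw [ZMod.card]
          linarith [step2]
  have hpos : (0:ℝ) < 4 * (k : ℝ) + 2 := by positivity
  have hmul : ε * (4 * (k : ℝ) + 2) < τ := (lt_div_iff₀ hpos).mp hmargin
  have hcast : ((2 * k + 1 : ℕ) : ℝ) = 2 * (k : ℝ) + 1 := by push_cast; ring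
  rw [hcast] at total
  nlinarith
end

section
/- ε-robust cyclic exclusivity inequality: let n ≥ 3, let μ be a probability mass function on a finite type Ω, and let χ : ZMod n → Ω → Bool satisfy adjacent exclusivity pointwise: for every ω ∈ Ω and every i ∈ ZMod n, not both χ(i)(ω) = true and χ(i+1)(ω) = true. If the observed values q : ZMod n → ℝ satisfy |q(i) − μ-probability of {ω | χ(i)(ω) = true}| ≤ 2ε for every i, then ∑_{i ∈ ZMod n} q(i) ≤ ⌊n/2⌋ + 2·n·ε. -/
/-- An independent set in the `n`-cycle has size at most `n/2`. -/
lemma indep_card_le (n : ℕ) [NeZero n] (f : ZMod n → Bool)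
    (h : ∀ i : ZMod n, ¬(f i = true ∧ f (i + 1) = true)) :
    (Finset.univ.filter (fun i => f i = true)).card ≤ n / 2 := by
  rw [Nat.le_div_iff_mul_le (by norm_num)]
  have key : ∀ i : ZMod n,
      ((if f i = true then 1 else 0) + (if f (i+1) = true then 1 else 0) : ℕ) ≤ 1 := by
    intro i
    by_cases h1 : f i = true <;> by_cases h2 : f (i+1) = true <;>
      simp [h1, h2] <;> exact (h i ⟨h1, h2⟩).elim
  have hsum : ∑ i : ZMod n,
      ((if f i = true then 1 else 0) + (if f (i+1) = true then 1 else 0) : ℕ) ≤ n := by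
    calc ∑ i : ZMod n, ((if f i = true then 1 else 0) + (if f (i+1) = true then 1 else 0) : ℕ)
        ≤ ∑ _i : ZMod n, 1 := Finset.sum_le_sum (fun i _ => key i)
      _ = n := by simp [ZMod.card]
  have hshift : ∑ i : ZMod n, (if f (i+1) = true then 1 else 0 : ℕ)
      = ∑ i : ZMod n, (if f i = true then 1 else 0 : ℕ) :=
    Fintype.sum_equiv (Equiv.addRight 1) _ _ (fun i => rfl)
  have hcard : (Finset.univ.filter (fun i => f i = true)).card
      = ∑ i : ZMod n, (if f i = true then 1 else 0 : ℕ) := by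
    rw [Finset.card_filter]
  rw [Finset.sum_add_distrib, hshift, ← hcard] at hsum
  omega

/-- ε-robust cyclic exclusivity: for adjacent-exclusive events `χ i` on an
`n`-cycle and observed values `q i` within `2ε` of the true probabilities,
`∑ i, q i ≤ ⌊n/2⌋ + 2nε`. -/
theorem stmt9 (n : ℕ) [NeZero n] (hn : 3 ≤ n)
    {Ω : Type*} [Fintype Ω]
    (μ : Ω → ℝ) (hnn : ∀ ω, 0 ≤ μ ω) (hsum : ∑ ω, μ ω = 1)
    (χ : ZMod n → Ω → Bool)
    (hexcl : ∀ (ω : Ω) (i : ZMod n), ¬(χ i ω = true ∧ χ (i + 1) ω = true))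
    (q : ZMod n → ℝ) (ε : ℝ)
    (hq : ∀ i : ZMod n,
      |q i - ∑ ω ∈ Finset.univ.filter (fun ω => χ i ω = true), μ ω| ≤ 2 * ε) :
    ∑ i : ZMod n, q i ≤ ((n / 2 : ℕ) : ℝ) + 2 * (n : ℝ) * ε := by
  set p : ZMod n → ℝ := fun i => ∑ ω ∈ Finset.univ.filter (fun ω => χ i ω = true), μ ω
  have hp : ∑ i : ZMod n, p i ≤ ((n / 2 : ℕ) : ℝ) := by
    have : ∑ i : ZMod n, p i
        = ∑ ω, μ ω * ((Finset.univ.filter (fun i : ZMod n => χ i ω = true)).card : ℝ) := by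
      simp only [p, Finset.sum_filter]
      rw [Finset.sum_comm]
      congr 1
      ext ω
      rw [Finset.card_filter]
      push_cast
      rw [Finset.mul_sum]
      congr 1
      ext i
      by_cases h : χ i ω = true <;> simp [h]
    rw [this]
    calc ∑ ω, μ ω * ((Finset.univ.filter (fun i : ZMod n => χ i ω = true)).card : ℝ)
        ≤ ∑ ω, μ ω * ((n / 2 : ℕ) : ℝ) := by
          apply Finset.sum_le_sum
          intro ω _
          exact mul_le_mul_of_nonneg_left
            (Nat.cast_le.mpr (indep_card_le n (fun i => χ i ω) (hexcl ω))) (hnn ω)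
      _ = ((n / 2 : ℕ) : ℝ) := by rw [← Finset.sum_mul, hsum, one_mul]
  have hqp : ∀ i : ZMod n, q i ≤ p i + 2 * ε := by
    intro i
    have := abs_le.mp (hq i)
    linarith [this.2]
  calc ∑ i : ZMod n, q i ≤ ∑ i : ZMod n, (p i + 2 * ε) :=
        Finset.sum_le_sum (fun i _ => hqp i)
    _ = ∑ i : ZMod n, p i + (n : ℝ) * (2 * ε) := by
        rw [Finset.sum_add_distrib, Finset.sum_const, Finset.card_univ, ZMod.card, nsmul_eq_mul]
    _ ≤ ((n / 2 : ℕ) : ℝ) + 2 * (n : ℝ) * ε := by linarith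
end
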